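/- arXiv:1108.5598 — 2 statements merged into one kernel-verified Lean document; each statement's English description precedes it below -/
import Mathlib

section
/- For every natural number k, the character of the second symmetric power of the k-th symmetric power of the defining SL₂-representation satisfies Σ_{0 ≤ i ≤ j ≤ k} q^{(k-2i)+(k-2j)} = Σ_{j=0}^{⌊k/2⌋} χ_{2k-4j}(q), where χ_n(q) = Σ_{i=0}^{n} q^{n-2i}. -/
open Finset

/-- The character of the irreducible `SL₂`-representation of highest weight `n`. -/
noncomputable def chi (n : ℕ) : LaurentPolynomial ℤ :=
  ∑ i ∈ Finset.range (n + 1), LaurentPolynomial.T ((n : ℤ) - 2 * i)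

private lemma sigma_mk_eq {a b c d : ℕ} (h1 : a = c) (h2 : b = d) :
    (⟨a, b⟩ : Σ _ : ℕ, ℕ) = ⟨c, d⟩ := by subst h1; subst h2; rfl

/-- The character of `S² S^k(ℂ²)` for `SL₂`, namely
`∑_{0 ≤ i ≤ j ≤ k} q^{(k-2i)+(k-2j)}`, decomposes as `∑_{j=0}^{⌊k/2⌋} χ_{2k-4j}`. -/
theorem symmetric_square_symmetric_power (k : ℕ) :
    ∑ j ∈ Finset.range (k + 1), ∑ i ∈ Finset.range (j + 1),
        LaurentPolynomial.T (((k : ℤ) - 2 * i) + ((k : ℤ) - 2 * j)) =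
      ∑ j ∈ Finset.range (k / 2 + 1), chi (2 * k - 4 * j) := by
  simp only [chi]
  rw [Finset.sum_sigma', Finset.sum_sigma']
  refine Finset.sum_bij'
    (fun p _ => if p.2 + p.1 ≤ k then ⟨p.2, p.1 - p.2⟩ else ⟨k - p.1, p.2 + 3 * p.1 - 2 * k⟩)
    (fun p _ => if p.2 ≤ k - 2 * p.1 then ⟨p.1 + p.2, p.1⟩ else ⟨k - p.1, 3 * p.1 + p.2 - k⟩)
    ?_ ?_ ?_ ?_ ?_
  · rintro ⟨j, i⟩ hp
    simp only [Finset.mem_sigma, Finset.mem_range] at hp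
    dsimp only
    split_ifs with h <;> simp only [Finset.mem_sigma, Finset.mem_range] <;> omega
  · rintro ⟨a, b⟩ hp
    simp only [Finset.mem_sigma, Finset.mem_range] at hp
    dsimp only
    split_ifs with h <;> simp only [Finset.mem_sigma, Finset.mem_range] <;> omega
  · rintro ⟨j, i⟩ hp
    simp only [Finset.mem_sigma, Finset.mem_range] at hp
    dsimp only
    by_cases h : i + j ≤ k
    · rw [if_pos h]
      dsimp only
      rw [if_pos (show j - i ≤ k - 2 * i by omega)]
      exact sigma_mk_eq (by omega) rfl
    · rw [if_neg h]
      dsimp only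
      rw [if_neg (show ¬ (i + 3 * j - 2 * k ≤ k - 2 * (k - j)) by omega)]
      exact sigma_mk_eq (by omega) (by omega)
  · rintro ⟨a, b⟩ hp
    simp only [Finset.mem_sigma, Finset.mem_range] at hp
    dsimp only
    by_cases h : b ≤ k - 2 * a
    · rw [if_pos h]
      dsimp only
      rw [if_pos (show a + (a + b) ≤ k by omega)]
      exact sigma_mk_eq rfl (by omega)
    · rw [if_neg h]
      dsimp only
      rw [if_neg (show ¬ (3 * a + b - k + (k - a) ≤ k) by omega)]
      exact sigma_mk_eq (by omega) (by omega)
  · rintro ⟨j, i⟩ hp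
    simp only [Finset.mem_sigma, Finset.mem_range] at hp
    dsimp only
    by_cases h : i + j ≤ k
    · rw [if_pos h]
      dsimp only
      congr 1
      omega
    · rw [if_neg h]
      dsimp only
      congr 1
      omega
end

section
/- For all natural numbers n, m ≥ 1 and k ≥ 0, the Cauchy identity in dimensions holds: C(nm + k − 1, k) = Σ_λ s_λ(1,…,1 [n ones]) · s_λ(1,…,1 [m ones]), where the sum is over partitions λ of k with at most min(n,m) rows. (This expresses (GL_n, GL_m) duality S^k(ℂⁿ⊗ℂᵐ) = ⊕ V(λ)⊗V(λ) at the level of dimensions.) -/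
open Finset

/-- The Young diagram of a partition. -/
def toYoungDiagram {k : ℕ} (p : Nat.Partition k) : YoungDiagram :=
  YoungDiagram.ofRowLens ((p.parts.sort (· ≤ ·)).reverse)
    (by exact List.sortedGE_iff_pairwise.mpr (List.pairwise_reverse.mpr (p.parts.pairwise_sort (· ≤ ·))))

/-- The number of semistandard Young tableaux of shape `μ` with entries among `n`
values; this is the value `s_μ(1,…,1)` (`n` ones) of the Schur polynomial, i.e.
the dimension of the irreducible polynomial `GL_n`-representation of highest
weight `μ`. -/
noncomputable def ssytCount (μ : YoungDiagram) (n : ℕ) : ℕ :=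
  Nat.card {T : SemistandardYoungTableau μ // ∀ i j, (i, j) ∈ μ → T i j < n}

/-!
Both sides count the same objects, matched by the RSK correspondence in the form of Fomin's
growth diagrams. By stars and bars the left side counts `m × n` matrices of naturals with entry
sum `k`. Place the entries in the squares of a grid, put the empty partition on the left and
bottom edges, and fill in the remaining corners with Fomin's local rule. Reading along the top
and the right edge gives two chains of horizontal strips, i.e. semistandard tableaux with entries
`< n` and `< m`, of one common shape `λ ⊢ k`; a chain of `i` horizontal strips has at most `i`
rows, so `λ` has at most `min n m` rows. The local rule can be run backwards, which makes this a
bijection onto such pairs of tableaux; summing over `λ` gives the right side.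

Partitions are handled as row-length functions `ℕ → ℕ`.
-/

namespace YoungDiagram

theorem rowLen_injective : Function.Injective rowLen := fun μ ν h => by
  ext ⟨r, j⟩
  simp only [mem_cells, mem_iff_lt_rowLen, h]

theorem rowLens_injective : Function.Injective rowLens := fun _ _ h =>
  equivListRowLens.injective (Subtype.ext h)

theorem rowLen_eq_zero_iff (μ : YoungDiagram) {N : ℕ} : μ.rowLen N = 0 ↔ μ.colLen 0 ≤ N := by
  rw [← not_lt, ← mem_iff_lt_colLen, mem_iff_lt_rowLen]
  omega

theorem sum_range_rowLen (μ : YoungDiagram) {N : ℕ} (hN : μ.colLen 0 ≤ N) :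
    ∑ r ∈ range N, μ.rowLen r = #μ.cells := by
  have hmaps : Set.MapsTo Prod.fst (μ.cells : Set (ℕ × ℕ)) (range N : Set ℕ) := fun c hc => by
    have : (c.1, 0) ∈ μ := μ.up_left_mem le_rfl (Nat.zero_le _) ((mem_cells c).mp (mem_coe.mp hc))
    exact mem_range.mpr ((mem_iff_lt_colLen.mp this).trans_le hN)
  rw [card_eq_sum_card_fiberwise hmaps]
  exact sum_congr rfl fun r _ => μ.rowLen_eq_card

theorem sum_rowLens (μ : YoungDiagram) : μ.rowLens.sum = #μ.cells :=
  (show μ.rowLens.sum = ∑ r ∈ range (μ.colLen 0), μ.rowLen r from rfl).trans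
    (μ.sum_range_rowLen le_rfl)

theorem exists_rowLen_eq {g : ℕ → ℕ} (hg : Antitone g) {N : ℕ} (hN : g N = 0) :
    ∃ μ : YoungDiagram, μ.rowLen = g := by
  have hbound : ∀ {r j}, j < g r → r < N ∧ j < g 0 := fun {r j} h =>
    ⟨lt_of_not_ge fun hr => by have := hg hr; omega, h.trans_le (hg (Nat.zero_le r))⟩
  let μ : YoungDiagram :=
    { cells := (range N ×ˢ range (g 0)).filter fun c => c.2 < g c.1
      isLowerSet := by
        rintro ⟨r₂, j₂⟩ ⟨r₁, j₁⟩ ⟨hr, hj⟩ h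
        simp only [coe_filter, mem_product, mem_range, Set.mem_ofPred_eq] at h ⊢
        have : j₁ < g r₁ := hj.trans_lt (h.2.trans_le (hg hr))
        exact ⟨hbound this, this⟩ }
  refine ⟨μ, funext fun r => eq_of_forall_lt_iff fun j => ?_⟩
  rw [← mem_iff_lt_rowLen, ← mem_cells]
  simp only [μ, mem_filter, mem_product, mem_range]
  exact ⟨And.right, fun h => ⟨hbound h, h⟩⟩

end YoungDiagram

namespace Nat.Partition

variable {k : ℕ}

theorem rowLens_toYoungDiagram (p : Nat.Partition k) :
    (toYoungDiagram p).rowLens = (p.parts.sort (· ≤ ·)).reverse :=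
  YoungDiagram.rowLens_ofRowLens_eq_self fun _ h =>
    p.parts_pos ((Multiset.mem_sort _).mp (List.mem_reverse.mp h))

theorem coe_rowLens_toYoungDiagram (p : Nat.Partition k) :
    ((toYoungDiagram p).rowLens : Multiset ℕ) = p.parts := by
  rw [rowLens_toYoungDiagram, Multiset.coe_reverse, Multiset.sort_eq]

theorem toYoungDiagram_injective : Function.Injective (toYoungDiagram (k := k)) := fun p q h =>
  Nat.Partition.ext (by rw [← coe_rowLens_toYoungDiagram, h, coe_rowLens_toYoungDiagram])

theorem colLen_toYoungDiagram (p : Nat.Partition k) :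
    (toYoungDiagram p).colLen 0 = p.parts.card := by
  rw [← YoungDiagram.length_rowLens, ← Multiset.coe_card, coe_rowLens_toYoungDiagram]

theorem card_cells_toYoungDiagram (p : Nat.Partition k) : #(toYoungDiagram p).cells = k := by
  rw [← YoungDiagram.sum_rowLens, ← Multiset.sum_coe, coe_rowLens_toYoungDiagram, p.parts_sum]

theorem exists_toYoungDiagram_eq (μ : YoungDiagram) (hμ : #μ.cells = k) :
    ∃ p : Nat.Partition k, toYoungDiagram p = μ := by
  refine ⟨⟨μ.rowLens, fun h => μ.pos_of_mem_rowLens _ h, by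
    rw [Multiset.sum_coe, μ.sum_rowLens, hμ]⟩, YoungDiagram.rowLens_injective ?_⟩
  have hsorted : μ.rowLens.reverse.Pairwise (· ≤ ·) :=
    List.pairwise_reverse.mpr (List.sortedGE_iff_pairwise.mp μ.rowLens_sorted)
  rw [rowLens_toYoungDiagram]
  change ((μ.rowLens : Multiset ℕ).sort (· ≤ ·)).reverse = μ.rowLens
  rw [← Multiset.coe_reverse, Multiset.coe_sort,
    List.mergeSort_eq_self _ hsorted, List.reverse_reverse]

end Nat.Partition

namespace RSK

def IsHorizontalStrip (μ lam : ℕ → ℕ) : Prop :=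
  (∀ r, μ r ≤ lam r) ∧ ∀ r, lam (r + 1) ≤ μ r

namespace IsHorizontalStrip

variable {ρ μ ν lam : ℕ → ℕ}

theorem antitone_left (h : IsHorizontalStrip μ lam) : Antitone μ :=
  antitone_nat_of_succ_le fun r => (h.1 (r + 1)).trans (h.2 r)

theorem antitone_right (h : IsHorizontalStrip μ lam) : Antitone lam :=
  antitone_nat_of_succ_le fun r => (h.2 r).trans (h.1 r)

theorem refl_of_antitone (hμ : Antitone μ) : IsHorizontalStrip μ μ :=
  ⟨fun _ => le_rfl, fun r => hμ r.le_succ⟩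

theorem bounds_of_common_bottom (h₁ : IsHorizontalStrip ρ μ) (h₂ : IsHorizontalStrip ρ ν)
    (r : ℕ) : max (μ (r + 1)) (ν (r + 1)) ≤ ρ r ∧ ρ r ≤ min (μ r) (ν r) :=
  ⟨max_le (h₁.2 r) (h₂.2 r), le_min (h₁.1 r) (h₂.1 r)⟩

theorem bounds_of_common_top (h₁ : IsHorizontalStrip μ lam) (h₂ : IsHorizontalStrip ν lam)
    (r : ℕ) : max (μ r) (ν r) ≤ lam r ∧ lam (r + 1) ≤ min (μ r) (ν r) :=
  ⟨max_le (h₁.1 r) (h₂.1 r), le_min (h₁.2 r) (h₂.2 r)⟩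

end IsHorizontalStrip

/-- Fomin's local rule for RSK at a square with bottom-left corner `ρ`, top-left `μ`,
bottom-right `ν` and matrix entry `t`: row `0` of the new corner receives the `t` inserted cells,
and row `r + 1` receives the `min (μ r) (ν r) - ρ r` cells bumped out of row `r`. -/
def localRule (ρ μ ν : ℕ → ℕ) (t : ℕ) : ℕ → ℕ
  | 0 => max (μ 0) (ν 0) + t
  | r + 1 => max (μ (r + 1)) (ν (r + 1)) + (min (μ r) (ν r) - ρ r)

def localRuleInv (μ ν lam : ℕ → ℕ) (r : ℕ) : ℕ :=
  max (μ (r + 1)) (ν (r + 1)) + (min (μ r) (ν r) - lam (r + 1))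

def localRuleEntry (μ ν lam : ℕ → ℕ) : ℕ :=
  lam 0 - max (μ 0) (ν 0)

section LocalRule

variable {ρ μ ν lam : ℕ → ℕ} {t : ℕ}

theorem localRule_comm : localRule ρ μ ν t = localRule ρ ν μ t := by
  funext r; cases r <;> simp only [localRule, max_comm, min_comm]

theorem localRuleInv_comm : localRuleInv μ ν lam = localRuleInv ν μ lam := by
  funext r; simp only [localRuleInv, max_comm, min_comm]

theorem isHorizontalStrip_localRule_left (h₁ : IsHorizontalStrip ρ μ)
    (h₂ : IsHorizontalStrip ρ ν) : IsHorizontalStrip μ (localRule ρ μ ν t) := by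
  refine ⟨fun r => ?_, fun r => ?_⟩
  · cases r <;> simp only [localRule] <;> omega
  · have := h₁.bounds_of_common_bottom h₂ r
    simp only [localRule]
    omega

theorem isHorizontalStrip_localRule_right (h₁ : IsHorizontalStrip ρ μ)
    (h₂ : IsHorizontalStrip ρ ν) : IsHorizontalStrip ν (localRule ρ μ ν t) :=
  localRule_comm (ρ := ρ) ▸ isHorizontalStrip_localRule_left h₂ h₁

theorem isHorizontalStrip_localRuleInv_left (h₁ : IsHorizontalStrip μ lam)
    (h₂ : IsHorizontalStrip ν lam) : IsHorizontalStrip (localRuleInv μ ν lam) μ := by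
  refine ⟨fun r => ?_, fun r => ?_⟩ <;>
  · have h := h₁.bounds_of_common_top h₂ r
    have h' := h₁.bounds_of_common_top h₂ (r + 1)
    simp only [localRuleInv]
    omega

theorem isHorizontalStrip_localRuleInv_right (h₁ : IsHorizontalStrip μ lam)
    (h₂ : IsHorizontalStrip ν lam) : IsHorizontalStrip (localRuleInv μ ν lam) ν :=
  localRuleInv_comm (lam := lam) ▸ isHorizontalStrip_localRuleInv_left h₂ h₁

theorem localRuleInv_localRule (h₁ : IsHorizontalStrip ρ μ) (h₂ : IsHorizontalStrip ρ ν) :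
    localRuleInv μ ν (localRule ρ μ ν t) = ρ := by
  funext r
  have := h₁.bounds_of_common_bottom h₂ r
  simp only [localRuleInv, localRule]
  omega

theorem localRuleEntry_localRule : localRuleEntry μ ν (localRule ρ μ ν t) = t := by
  simp [localRuleEntry, localRule]

theorem localRule_localRuleInv (h₁ : IsHorizontalStrip μ lam) (h₂ : IsHorizontalStrip ν lam) :
    localRule (localRuleInv μ ν lam) μ ν (localRuleEntry μ ν lam) = lam := by
  funext r
  cases r with
  | zero =>
    have := h₁.bounds_of_common_top h₂ 0
    simp only [localRule, localRuleEntry]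
    omega
  | succ r =>
    have := h₁.bounds_of_common_top h₂ r
    have := h₁.bounds_of_common_top h₂ (r + 1)
    simp only [localRule, localRuleInv]
    omega

theorem localRule_of_le (h : ∀ r, ν r ≤ μ r) : localRule ν μ ν 0 = μ := by
  funext r
  cases r with
  | zero => have := h 0; simp only [localRule]; omega
  | succ r => have := h r; have := h (r + 1); simp only [localRule]; omega

/-- Conservation of size `|λ| + |ρ| = t + |μ| + |ν|`, in a form truncated after row `N`. -/
theorem sum_localRule (h₁ : IsHorizontalStrip ρ μ) (h₂ : IsHorizontalStrip ρ ν) (N : ℕ) :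
    ∑ r ∈ range (N + 1), localRule ρ μ ν t r + ∑ r ∈ range N, ρ r + min (μ N) (ν N) =
      t + ∑ r ∈ range (N + 1), μ r + ∑ r ∈ range (N + 1), ν r := by
  induction N with
  | zero => simp only [zero_add, range_one, sum_singleton, range_zero, sum_empty, localRule]; omega
  | succ N ih =>
    have := h₁.bounds_of_common_bottom h₂ N
    simp only [sum_range_succ _ (N + 1), sum_range_succ _ N] at ih ⊢
    simp only [localRule] at ih ⊢
    omega

end LocalRule

/-- A semistandard tableau with entries `< n`, recorded by the shapes `shape i` formed by its
entries `< i`. The upper and right edges of a growth diagram are such chains. -/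
structure StripChain (n : ℕ) where
  shape : ℕ → ℕ → ℕ
  shape_zero : shape 0 = 0
  isHorizontalStrip_succ : ∀ i, IsHorizontalStrip (shape i) (shape (i + 1))
  shape_eq_of_le : ∀ i, n ≤ i → shape i = shape n

namespace StripChain

variable {n : ℕ}

def top (C : StripChain n) : ℕ → ℕ := C.shape n

@[ext] theorem ext {C D : StripChain n} (h : C.shape = D.shape) : C = D := by
  cases C; cases D; congr

theorem antitone_shape (C : StripChain n) (i : ℕ) : Antitone (C.shape i) := by
  cases i with
  | zero => rw [C.shape_zero]; exact antitone_const
  | succ i => exact (C.isHorizontalStrip_succ i).antitone_right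

theorem shape_le_shape (C : StripChain n) {i j : ℕ} (h : i ≤ j) (r : ℕ) :
    C.shape i r ≤ C.shape j r := by
  induction h with
  | refl => exact le_rfl
  | step _ ih => exact ih.trans ((C.isHorizontalStrip_succ _).1 r)

theorem shape_le_top (C : StripChain n) (i r : ℕ) : C.shape i r ≤ C.top r := by
  rcases le_total i n with h | h
  · exact C.shape_le_shape h r
  · rw [C.shape_eq_of_le i h]; rfl

/-- Each step adds at most one cell per column, so `shape i` has at most `i` rows. -/
theorem shape_eq_zero_of_le (C : StripChain n) {i r : ℕ} (h : i ≤ r) : C.shape i r = 0 := by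
  induction i generalizing r with
  | zero => simp [C.shape_zero]
  | succ i ih =>
    obtain ⟨r, rfl⟩ : ∃ r', r = r' + 1 := ⟨r - 1, by omega⟩
    have := (C.isHorizontalStrip_succ i).2 r
    have := ih (r := r) (by omega)
    omega

theorem shape_eq_zero_of_length_le (C : StripChain n) (i : ℕ) {r : ℕ} (h : n ≤ r) :
    C.shape i r = 0 :=
  Nat.eq_zero_of_le_zero ((C.shape_le_top i r).trans (C.shape_eq_zero_of_le h).le)

theorem eq_zero_of_top_eq_zero (C : StripChain n) (h : C.top = 0) : C.shape = 0 := by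
  funext i r
  simpa [h] using C.shape_le_top i r

def empty (n : ℕ) : StripChain n where
  shape := 0
  shape_zero := rfl
  isHorizontalStrip_succ _ := IsHorizontalStrip.refl_of_antitone antitone_const
  shape_eq_of_le _ _ := rfl

def snoc (Q : StripChain n) (lam : ℕ → ℕ) (h : IsHorizontalStrip Q.top lam) :
    StripChain (n + 1) where
  shape i := if i ≤ n then Q.shape i else lam
  shape_zero := by simp [Q.shape_zero]
  isHorizontalStrip_succ i := by
    rcases lt_trichotomy i n with hi | rfl | hi
    · simpa [hi.le, Nat.succ_le_of_lt hi] using Q.isHorizontalStrip_succ i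
    · simpa [top] using h
    · simpa [hi.not_ge, (hi.trans i.lt_succ_self).not_ge] using
        IsHorizontalStrip.refl_of_antitone h.antitone_right
  shape_eq_of_le i hi := by simp [show ¬i ≤ n by omega]

theorem snoc_shape_of_le (Q : StripChain n) (lam : ℕ → ℕ) (h : IsHorizontalStrip Q.top lam)
    {i : ℕ} (hi : i ≤ n) : (Q.snoc lam h).shape i = Q.shape i := if_pos hi

theorem snoc_top (Q : StripChain n) (lam : ℕ → ℕ) (h : IsHorizontalStrip Q.top lam) :
    (Q.snoc lam h).top = lam := if_neg (by omega)

def truncate (Q : StripChain (n + 1)) : StripChain n where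
  shape i := Q.shape (min i n)
  shape_zero := by simp [Q.shape_zero]
  isHorizontalStrip_succ i := by
    rcases lt_or_ge i n with hi | hi
    · rw [min_eq_left hi.le, min_eq_left hi]
      exact Q.isHorizontalStrip_succ i
    · rw [min_eq_right hi, min_eq_right (by omega)]
      exact IsHorizontalStrip.refl_of_antitone (Q.antitone_shape n)
  shape_eq_of_le i hi := by simp [min_eq_right hi]

theorem truncate_top (Q : StripChain (n + 1)) : Q.truncate.top = Q.shape n := by
  simp [top, truncate]

theorem truncate_snoc (Q : StripChain n) (lam : ℕ → ℕ) (h : IsHorizontalStrip Q.top lam) :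
    (Q.snoc lam h).truncate = Q := by
  ext i : 2
  rcases le_total i n with hi | hi
  · simp [truncate, min_eq_left hi, snoc_shape_of_le _ _ _ hi]
  · simp [truncate, min_eq_right hi, snoc_shape_of_le _ _ _ le_rfl, Q.shape_eq_of_le i hi]

theorem snoc_truncate (Q : StripChain (n + 1)) {lam : ℕ → ℕ}
    (h : IsHorizontalStrip Q.truncate.top lam) (hlam : lam = Q.top) :
    Q.truncate.snoc lam h = Q := by
  subst hlam
  ext i : 2
  rcases le_or_gt i n with hi | hi
  · simp [snoc_shape_of_le _ _ _ hi, truncate, min_eq_left hi]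
  · simp [snoc, show ¬i ≤ n by omega, top, Q.shape_eq_of_le i hi]

end StripChain

section RowPass

variable {n : ℕ}

/-- One row of a growth diagram: from the chain `B` below the row and the row `t` of the matrix,
the local rule produces the chain above it. -/
def rowInsert (B : ℕ → ℕ → ℕ) (t : Fin n → ℕ) : ℕ → ℕ → ℕ
  | 0 => 0
  | i + 1 => localRule (B i) (rowInsert B t i) (B (i + 1)) (if h : i < n then t ⟨i, h⟩ else 0)

theorem isHorizontalStrip_rowInsert (B : StripChain n) (t : Fin n → ℕ) (i : ℕ) :
    IsHorizontalStrip (B.shape i) (rowInsert B.shape t i) := by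
  induction i with
  | zero => rw [B.shape_zero]; exact IsHorizontalStrip.refl_of_antitone antitone_const
  | succ i ih => exact isHorizontalStrip_localRule_right ih (B.isHorizontalStrip_succ i)

theorem rowInsert_eq_of_le (B : StripChain n) (t : Fin n → ℕ) {i : ℕ} (hi : n ≤ i) :
    rowInsert B.shape t i = rowInsert B.shape t n := by
  induction i, hi using Nat.le_induction with
  | base => rfl
  | succ i hi ih =>
    have hB : B.shape i = B.top := B.shape_eq_of_le i hi
    have hle : ∀ r, B.top r ≤ rowInsert B.shape t i r :=
      hB ▸ (isHorizontalStrip_rowInsert B t i).1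
    rw [rowInsert, dif_neg (by omega), hB, B.shape_eq_of_le (i + 1) (by omega)]
    exact (localRule_of_le hle).trans ih

def growRow (B : StripChain n) (t : Fin n → ℕ) : StripChain n where
  shape := rowInsert B.shape t
  shape_zero := rfl
  isHorizontalStrip_succ i :=
    isHorizontalStrip_localRule_left (isHorizontalStrip_rowInsert B t i)
      (B.isHorizontalStrip_succ i)
  shape_eq_of_le _ := rowInsert_eq_of_le B t

theorem isHorizontalStrip_top_growRow (B : StripChain n) (t : Fin n → ℕ) :
    IsHorizontalStrip B.top (growRow B t).top :=
  isHorizontalStrip_rowInsert B t n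

/-- The reverse pass, recovering the chain below a row from the chain `T` above it and the
shape `ρ` at its right end. -/
def rowRemove (T : ℕ → ℕ → ℕ) (n : ℕ) (ρ : ℕ → ℕ) (i : ℕ) : ℕ → ℕ :=
  if i < n then localRuleInv (T i) (rowRemove T n ρ (i + 1)) (T (i + 1)) else ρ
termination_by n - i

theorem rowRemove_of_lt (T : ℕ → ℕ → ℕ) (ρ : ℕ → ℕ) {i : ℕ} (hi : i < n) :
    rowRemove T n ρ i = localRuleInv (T i) (rowRemove T n ρ (i + 1)) (T (i + 1)) := by
  rw [rowRemove, if_pos hi]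

theorem rowRemove_of_le (T : ℕ → ℕ → ℕ) (ρ : ℕ → ℕ) {i : ℕ} (hi : n ≤ i) :
    rowRemove T n ρ i = ρ := by
  rw [rowRemove, if_neg (by omega)]

theorem isHorizontalStrip_rowRemove {T : StripChain n} {ρ : ℕ → ℕ}
    (h : IsHorizontalStrip ρ T.top) (i : ℕ) :
    IsHorizontalStrip (rowRemove T.shape n ρ i) (T.shape i) := by
  rcases le_total n i with hi | hi
  · rwa [rowRemove_of_le _ _ hi, T.shape_eq_of_le i hi]
  induction hi using Nat.decreasingInduction with
  | self => rwa [rowRemove_of_le _ _ le_rfl]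
  | of_succ i hi ih =>
    rw [rowRemove_of_lt _ _ hi]
    exact isHorizontalStrip_localRuleInv_left (T.isHorizontalStrip_succ i) ih

def rowRemoveChain (T : StripChain n) (ρ : ℕ → ℕ) (h : IsHorizontalStrip ρ T.top) :
    StripChain n where
  shape := rowRemove T.shape n ρ
  shape_zero := by
    funext r
    simpa [T.shape_zero] using (isHorizontalStrip_rowRemove h 0).1 r
  isHorizontalStrip_succ i := by
    rcases lt_or_ge i n with hi | hi
    · rw [rowRemove_of_lt _ _ hi]
      exact isHorizontalStrip_localRuleInv_right (T.isHorizontalStrip_succ i)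
        (isHorizontalStrip_rowRemove h (i + 1))
    · rw [rowRemove_of_le _ _ hi, rowRemove_of_le _ _ (by omega)]
      exact IsHorizontalStrip.refl_of_antitone h.antitone_left
  shape_eq_of_le i hi := by rw [rowRemove_of_le _ _ hi, rowRemove_of_le _ _ le_rfl]

theorem rowRemoveChain_top (T : StripChain n) (ρ : ℕ → ℕ) (h : IsHorizontalStrip ρ T.top) :
    (rowRemoveChain T ρ h).top = ρ :=
  rowRemove_of_le _ _ le_rfl

def rowRemoveEntries (T : StripChain n) (ρ : ℕ → ℕ) (i : Fin n) : ℕ :=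
  localRuleEntry (T.shape i) (rowRemove T.shape n ρ (i + 1)) (T.shape (i + 1))

theorem rowRemove_rowInsert (B : StripChain n) (t : Fin n → ℕ) (i : ℕ) :
    rowRemove (rowInsert B.shape t) n B.top i = B.shape i := by
  rcases le_total n i with hi | hi
  · rw [rowRemove_of_le _ _ hi, B.shape_eq_of_le i hi]; rfl
  induction hi using Nat.decreasingInduction with
  | self => exact rowRemove_of_le _ _ le_rfl
  | of_succ i hi ih =>
    rw [rowRemove_of_lt _ _ hi, ih, rowInsert]
    exact localRuleInv_localRule (isHorizontalStrip_rowInsert B t i) (B.isHorizontalStrip_succ i)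

theorem rowRemoveChain_growRow (B : StripChain n) (t : Fin n → ℕ) {ρ : ℕ → ℕ}
    (h : IsHorizontalStrip ρ (growRow B t).top) (hρ : ρ = B.top) :
    rowRemoveChain (growRow B t) ρ h = B := by
  subst hρ
  ext i : 2
  exact rowRemove_rowInsert B t i

theorem rowRemoveEntries_growRow (B : StripChain n) (t : Fin n → ℕ) {ρ : ℕ → ℕ}
    (hρ : ρ = B.top) : rowRemoveEntries (growRow B t) ρ = t := by
  subst hρ
  funext i
  simp only [rowRemoveEntries, growRow, rowRemove_rowInsert, rowInsert, dif_pos i.isLt]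
  exact localRuleEntry_localRule

theorem rowInsert_rowRemove {T : StripChain n} {ρ : ℕ → ℕ} (h : IsHorizontalStrip ρ T.top)
    {i : ℕ} (hi : i ≤ n) :
    rowInsert (rowRemove T.shape n ρ) (rowRemoveEntries T ρ) i = T.shape i := by
  induction i with
  | zero => exact T.shape_zero.symm
  | succ i ih =>
    rw [rowInsert, ih (by omega), dif_pos (by omega), rowRemove_of_lt _ _ (by omega)]
    exact localRule_localRuleInv (T.isHorizontalStrip_succ i) (isHorizontalStrip_rowRemove h _)

theorem growRow_rowRemoveChain {T : StripChain n} {ρ : ℕ → ℕ} (h : IsHorizontalStrip ρ T.top) :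
    growRow (rowRemoveChain T ρ h) (rowRemoveEntries T ρ) = T := by
  ext i : 2
  rcases le_total i n with hi | hi
  · exact rowInsert_rowRemove h hi
  · rw [(growRow _ _).shape_eq_of_le i hi, T.shape_eq_of_le i hi]
    exact rowInsert_rowRemove h le_rfl

theorem sum_top_growRow (B : StripChain n) (t : Fin n → ℕ) :
    ∑ r ∈ range n, (growRow B t).top r = ∑ r ∈ range n, B.top r + ∑ i, t i := by
  have key : ∀ i ≤ n, ∑ r ∈ range n, rowInsert B.shape t i r =
      ∑ r ∈ range n, B.shape i r + ∑ j ∈ range i, (if h : j < n then t ⟨j, h⟩ else 0) := by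
    intro i hi
    induction i with
    | zero => simp [rowInsert, B.shape_zero]
    | succ i ih =>
      have hsize := sum_localRule (t := if h : i < n then t ⟨i, h⟩ else 0)
        (isHorizontalStrip_rowInsert B t i) (B.isHorizontalStrip_succ i) n
      have hvanish : ∀ j, rowInsert B.shape t j n = 0 := fun j =>
        (growRow B t).shape_eq_zero_of_length_le j le_rfl
      rw [show localRule _ _ _ _ = rowInsert B.shape t (i + 1) from rfl] at hsize
      simp only [sum_range_succ, hvanish, B.shape_eq_zero_of_length_le _ le_rfl, min_self]
        at hsize ⊢
      have := ih (by omega)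
      omega
  change ∑ r ∈ range n, rowInsert B.shape t n r = _
  rw [key n le_rfl, ← Fin.sum_univ_eq_sum_range (fun j => if h : j < n then t ⟨j, h⟩ else 0) n]
  simp [StripChain.top]

end RowPass

/-- Pairs of chains with a common top shape: the upper and right boundary of a growth diagram. -/
def ChainPair (n m : ℕ) : Type := {p : StripChain n × StripChain m // p.2.top = p.1.top}

namespace ChainPair

variable {n m : ℕ}

def size (x : ChainPair n m) : ℕ := ∑ r ∈ range n, x.1.1.top r

instance : Unique (ChainPair n 0) where
  default := ⟨(.empty n, .empty 0), rfl⟩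
  uniq := by
    rintro ⟨⟨C, Q⟩, hCQ⟩
    have hQ : Q.top = 0 := Q.shape_zero
    refine Subtype.ext (Prod.ext ?_ ?_) <;> ext1
    · exact C.eq_zero_of_top_eq_zero (hCQ ▸ hQ)
    · exact Q.eq_zero_of_top_eq_zero hQ

theorem isHorizontalStrip_growRow (x : ChainPair n m) (t : Fin n → ℕ) :
    IsHorizontalStrip x.1.2.top (growRow x.1.1 t).top := by
  rw [x.2]; exact isHorizontalStrip_top_growRow x.1.1 t

theorem isHorizontalStrip_shape_top (y : ChainPair n (m + 1)) :
    IsHorizontalStrip (y.1.2.shape m) y.1.1.top := by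
  rw [← y.2]; exact y.1.2.isHorizontalStrip_succ m

def growEquiv : (Fin n → ℕ) × ChainPair n m ≃ ChainPair n (m + 1) where
  toFun x :=
    ⟨(growRow x.2.1.1 x.1, x.2.1.2.snoc _ (x.2.isHorizontalStrip_growRow x.1)),
      StripChain.snoc_top _ _ (x.2.isHorizontalStrip_growRow x.1)⟩
  invFun y :=
    (rowRemoveEntries y.1.1 (y.1.2.shape m),
      ⟨(rowRemoveChain y.1.1 _ y.isHorizontalStrip_shape_top, y.1.2.truncate), by
        rw [StripChain.truncate_top, rowRemoveChain_top]⟩)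
  left_inv := by
    rintro ⟨t, ⟨C, Q⟩, hCQ⟩
    have h := isHorizontalStrip_growRow ⟨(C, Q), hCQ⟩ t
    have hρ : (Q.snoc _ h).shape m = C.top := by
      rw [StripChain.snoc_shape_of_le _ _ _ le_rfl]; exact hCQ
    refine Prod.ext (rowRemoveEntries_growRow C t hρ) (Subtype.ext (Prod.ext ?_ ?_))
    · exact rowRemoveChain_growRow C t (by rw [hρ]; exact isHorizontalStrip_top_growRow C t) hρ
    · exact StripChain.truncate_snoc Q _ h
  right_inv := by
    rintro ⟨⟨T, Q⟩, hTQ⟩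
    have hT := growRow_rowRemoveChain (isHorizontalStrip_shape_top ⟨(T, Q), hTQ⟩)
    refine Subtype.ext (Prod.ext hT ?_)
    refine StripChain.snoc_truncate Q ?_ (by rw [hT]; exact hTQ.symm)
    rw [StripChain.truncate_top, hT, ← hTQ]
    exact Q.isHorizontalStrip_succ m

end ChainPair

/-- The RSK correspondence, built one matrix row at a time. -/
def growthDiagram (n : ℕ) : (m : ℕ) → (Fin m → Fin n → ℕ) ≃ ChainPair n m
  | 0 => Equiv.ofUnique _ _
  | m + 1 => (Fin.snocEquiv fun _ => Fin n → ℕ).symm.trans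
      (((Equiv.refl _).prodCongr (growthDiagram n m)).trans ChainPair.growEquiv)

theorem size_growthDiagram (n : ℕ) :
    ∀ (m : ℕ) (M : Fin m → Fin n → ℕ), (growthDiagram n m M).size = ∑ j, ∑ i, M j i
  | 0, M => by
    rw [Subsingleton.elim (growthDiagram n 0 M) default]
    simp [ChainPair.size, StripChain.top, StripChain.empty, default]
  | m + 1, M => by
    have hrow : (growthDiagram n (m + 1) M).1.1 =
        growRow (growthDiagram n m fun j => M j.castSucc).1.1 (M (Fin.last m)) := rfl
    rw [ChainPair.size, hrow, sum_top_growRow, ← ChainPair.size, size_growthDiagram n m,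
      Fin.sum_univ_castSucc]

section Tableaux

variable {μ : YoungDiagram} {n : ℕ}

def ltDiagram (T : SemistandardYoungTableau μ) (i : ℕ) : YoungDiagram where
  cells := μ.cells.filter fun c => T c.1 c.2 < i
  isLowerSet := by
    rintro ⟨r₂, j₂⟩ ⟨r₁, j₁⟩ ⟨hr, hj⟩ hmem
    simp only [coe_filter, Set.mem_ofPred_eq, YoungDiagram.mem_cells] at hmem ⊢
    refine ⟨μ.up_left_mem hr hj hmem.1, lt_of_le_of_lt ?_ hmem.2⟩
    calc T r₁ j₁ ≤ T r₁ j₂ := T.row_weak_of_le hj (μ.up_left_mem hr le_rfl hmem.1)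
      _ ≤ T r₂ j₂ := T.col_weak hr hmem.1

theorem lt_rowLen_ltDiagram (T : SemistandardYoungTableau μ) {i r j : ℕ} :
    j < (ltDiagram T i).rowLen r ↔ (r, j) ∈ μ ∧ T r j < i := by
  rw [← YoungDiagram.mem_iff_lt_rowLen]
  exact mem_filter.trans (and_congr_left' (YoungDiagram.mem_cells _))

def StripChain.ofTableau (T : SemistandardYoungTableau μ) (hT : ∀ r j, (r, j) ∈ μ → T r j < n) :
    StripChain n where
  shape i := (ltDiagram T i).rowLen
  shape_zero := by
    funext r
    refine eq_of_forall_lt_iff fun j => ?_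
    simp [lt_rowLen_ltDiagram]
  isHorizontalStrip_succ i := by
    refine ⟨fun r => le_of_forall_lt fun j hj => ?_, fun r => le_of_forall_lt fun j hj => ?_⟩
      <;> rw [lt_rowLen_ltDiagram] at hj ⊢
    · exact ⟨hj.1, hj.2.trans i.lt_succ_self⟩
    · have := T.col_strict (Nat.lt_add_one r) hj.1
      exact ⟨μ.up_left_mem r.le_succ le_rfl hj.1, by omega⟩
  shape_eq_of_le i hi := by
    funext r
    refine eq_of_forall_lt_iff fun j => ?_
    simp only [lt_rowLen_ltDiagram]
    exact ⟨fun h => ⟨h.1, hT r j h.1⟩, fun h => ⟨h.1, (hT r j h.1).trans_le hi⟩⟩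

theorem StripChain.top_ofTableau (T : SemistandardYoungTableau μ)
    (hT : ∀ r j, (r, j) ∈ μ → T r j < n) : (StripChain.ofTableau T hT).top = μ.rowLen := by
  funext r
  refine eq_of_forall_lt_iff fun j => ?_
  rw [StripChain.top, StripChain.ofTableau, lt_rowLen_ltDiagram, ← YoungDiagram.mem_iff_lt_rowLen]
  exact ⟨And.left, fun h => ⟨h, hT r j h⟩⟩

namespace StripChain

theorem exists_lt_shape_succ (C : StripChain n) (hC : C.top = μ.rowLen) {r j : ℕ}
    (h : (r, j) ∈ μ) : ∃ i, j < C.shape (i + 1) r :=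
  ⟨n, by
    rw [C.shape_eq_of_le _ n.le_succ]
    change j < C.top r
    rw [hC]
    exact YoungDiagram.mem_iff_lt_rowLen.mp h⟩

def entry (C : StripChain n) (hC : C.top = μ.rowLen) (r j : ℕ) : ℕ :=
  if h : (r, j) ∈ μ then Nat.find (C.exists_lt_shape_succ hC h) else 0

theorem entry_lt_iff (C : StripChain n) (hC : C.top = μ.rowLen) {r j : ℕ} (h : (r, j) ∈ μ)
    (i : ℕ) : C.entry hC r j < i ↔ j < C.shape i r := by
  rw [entry, dif_pos h]
  constructor
  · intro hi
    exact (Nat.find_spec (C.exists_lt_shape_succ hC h)).trans_le (C.shape_le_shape hi r)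
  · intro hj
    obtain ⟨i, rfl⟩ : ∃ i', i = i' + 1 := ⟨i - 1, by
      have : i ≠ 0 := by rintro rfl; simp [C.shape_zero] at hj
      omega⟩
    exact Nat.lt_succ_of_le (Nat.find_min' _ hj)

def toTableau (C : StripChain n) (hC : C.top = μ.rowLen) : SemistandardYoungTableau μ where
  entry := C.entry hC
  row_weak' {r j₁ j₂} hj h₂ := by
    have h₁ : (r, j₁) ∈ μ := μ.up_left_mem le_rfl hj.le h₂
    rw [← Nat.lt_succ_iff, C.entry_lt_iff hC h₁]
    exact hj.trans ((C.entry_lt_iff hC h₂ _).mp (Nat.lt_succ_self _))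
  col_strict' {r₁ r₂ j} hr h₂ := by
    have h₁ : (r₁, j) ∈ μ := μ.up_left_mem hr.le le_rfl h₂
    obtain ⟨r, rfl⟩ : ∃ r, r₂ = r + 1 := ⟨r₂ - 1, by omega⟩
    rw [C.entry_lt_iff hC h₁]
    calc j < C.shape (C.entry hC (r + 1) j + 1) (r + 1) :=
          (C.entry_lt_iff hC h₂ _).mp (Nat.lt_succ_self _)
      _ ≤ C.shape (C.entry hC (r + 1) j) r := (C.isHorizontalStrip_succ _).2 r
      _ ≤ C.shape (C.entry hC (r + 1) j) r₁ := C.antitone_shape _ (Nat.le_of_lt_succ hr)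
  zeros' h := by simp [entry, h]

theorem toTableau_lt (C : StripChain n) (hC : C.top = μ.rowLen) :
    ∀ r j, (r, j) ∈ μ → C.toTableau hC r j < n := fun r j h => by
  change C.entry hC r j < n
  rw [C.entry_lt_iff hC h]
  change j < C.top r
  rw [hC]
  exact YoungDiagram.mem_iff_lt_rowLen.mp h

theorem toTableau_ofTableau (T : SemistandardYoungTableau μ)
    (hT : ∀ r j, (r, j) ∈ μ → T r j < n) :
    (ofTableau T hT).toTableau (top_ofTableau T hT) = T := by
  ext r j
  by_cases h : (r, j) ∈ μ
  · refine eq_of_forall_gt_iff fun i => ?_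
    change entry _ (top_ofTableau T hT) r j < i ↔ _
    rw [entry_lt_iff _ _ h]
    simp [ofTableau, lt_rowLen_ltDiagram, h]
  · rw [T.zeros h]
    exact (toTableau _ _).zeros h

theorem ofTableau_toTableau (C : StripChain n) (hC : C.top = μ.rowLen) :
    ofTableau (C.toTableau hC) (C.toTableau_lt hC) = C := by
  ext1
  funext i r
  refine eq_of_forall_lt_iff fun j => ?_
  rw [ofTableau, lt_rowLen_ltDiagram]
  constructor
  · rintro ⟨h, hj⟩
    exact (C.entry_lt_iff hC h i).mp hj
  · intro hj
    have h : (r, j) ∈ μ := by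
      rw [YoungDiagram.mem_iff_lt_rowLen, ← hC]
      exact hj.trans_le (C.shape_le_top i r)
    exact ⟨h, (C.entry_lt_iff hC h i).mpr hj⟩

end StripChain

abbrev ChainsEndingAt (n : ℕ) (μ : YoungDiagram) : Type := {C : StripChain n // C.top = μ.rowLen}

def tableauEquivChainsEndingAt (μ : YoungDiagram) (n : ℕ) :
    {T : SemistandardYoungTableau μ // ∀ r j, (r, j) ∈ μ → T r j < n} ≃ ChainsEndingAt n μ where
  toFun T := ⟨.ofTableau T.1 T.2, StripChain.top_ofTableau T.1 T.2⟩
  invFun C := ⟨C.1.toTableau C.2, C.1.toTableau_lt C.2⟩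
  left_inv T := Subtype.ext (StripChain.toTableau_ofTableau T.1 T.2)
  right_inv C := Subtype.ext (StripChain.ofTableau_toTableau C.1 C.2)

theorem ssytCount_eq_card_chainsEndingAt (μ : YoungDiagram) (n : ℕ) :
    ssytCount μ n = Nat.card (ChainsEndingAt n μ) :=
  Nat.card_congr (tableauEquivChainsEndingAt μ n)

end Tableaux

section Counting

variable {n m k : ℕ}

noncomputable def matrixSumEquivSym (n m k : ℕ) :
    {M : Fin m → Fin n → ℕ // ∑ j, ∑ i, M j i = k} ≃ Sym (Fin m × Fin n) k :=
  ((Equiv.curry _ _ _).symm.subtypeEquiv fun M => by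
    rw [Fintype.sum_prod_type]; rfl).trans (Sym.equivNatSumOfFintype _ k).symm

theorem card_matrix_sum_eq (n m k : ℕ) :
    Nat.card {M : Fin m → Fin n → ℕ // ∑ j, ∑ i, M j i = k} = (n * m + k - 1).choose k := by
  rw [Nat.card_congr (matrixSumEquivSym n m k), Nat.card_eq_fintype_card, Sym.card_sym_eq_choose,
    Fintype.card_prod, Fintype.card_fin, Fintype.card_fin, mul_comm]

def chainPairSizeEquiv (n m k : ℕ) :
    {x : ChainPair n m // x.size = k} ≃ {M : Fin m → Fin n → ℕ // ∑ j, ∑ i, M j i = k} :=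
  ((growthDiagram n m).subtypeEquiv fun M => by rw [size_growthDiagram]).symm

abbrev ShapedChainPairs (n m k : ℕ) : Type :=
  Σ p : {p : Nat.Partition k // p.parts.card ≤ min n m},
    ChainsEndingAt n (toYoungDiagram p.1) × ChainsEndingAt m (toYoungDiagram p.1)

def ShapedChainPairs.toChainPair : ShapedChainPairs n m k → {x : ChainPair n m // x.size = k} :=
  fun ⟨p, C, Q⟩ => ⟨⟨(C.1, Q.1), Q.2.trans C.2.symm⟩, by
    change ∑ r ∈ range n, C.1.top r = k
    rw [C.2, YoungDiagram.sum_range_rowLen _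
        ((p.1.colLen_toYoungDiagram).trans_le (p.2.trans (min_le_left n m))),
      p.1.card_cells_toYoungDiagram]⟩

/-- The common top shape of a chain pair of size `k` is the diagram of a unique partition of `k`,
which has at most `min n m` rows. -/
theorem ShapedChainPairs.toChainPair_bijective :
    Function.Bijective (toChainPair (n := n) (m := m) (k := k)) := by
  constructor
  · rintro ⟨p, C, Q⟩ ⟨p', C', Q'⟩ h
    have hC : C.1 = C'.1 := congrArg (fun x => x.1.1.1) h
    have hQ : Q.1 = Q'.1 := congrArg (fun x => x.1.1.2) h
    obtain rfl : p = p' := Subtype.ext (Nat.Partition.toYoungDiagram_injective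
      (YoungDiagram.rowLen_injective (C.2.symm.trans ((congrArg StripChain.top hC).trans C'.2))))
    obtain rfl : C = C' := Subtype.ext hC
    obtain rfl : Q = Q' := Subtype.ext hQ
    rfl
  · rintro ⟨⟨⟨C, Q⟩, hCQ⟩, hsize⟩
    obtain ⟨μ, hμ⟩ := YoungDiagram.exists_rowLen_eq (C.antitone_shape n)
      (C.shape_eq_zero_of_length_le n le_rfl)
    have hn : μ.colLen 0 ≤ n := by
      rw [← μ.rowLen_eq_zero_iff, hμ]; exact C.shape_eq_zero_of_length_le n le_rfl
    have hm : μ.colLen 0 ≤ m := by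
      rw [← μ.rowLen_eq_zero_iff, hμ, ← StripChain.top, ← hCQ]
      exact Q.shape_eq_zero_of_length_le m le_rfl
    obtain ⟨p, rfl⟩ := Nat.Partition.exists_toYoungDiagram_eq (k := k) μ
      (by rw [← μ.sum_range_rowLen hn, hμ]; exact hsize)
    rw [p.colLen_toYoungDiagram] at hn hm
    exact ⟨⟨⟨p, le_min hn hm⟩, ⟨C, hμ.symm⟩, ⟨Q, hCQ.trans hμ.symm⟩⟩, rfl⟩

theorem card_chainPair_size_eq :
    Nat.card {x : ChainPair n m // x.size = k} =
      ∑ p ∈ univ.filter (fun p : Nat.Partition k => p.parts.card ≤ min n m),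
        Nat.card (ChainsEndingAt n (toYoungDiagram p)) *
          Nat.card (ChainsEndingAt m (toYoungDiagram p)) := by
  have : Finite {x : ChainPair n m // x.size = k} :=
    .of_equiv _ ((chainPairSizeEquiv n m k).trans (matrixSumEquivSym n m k)).symm
  have : Finite (ShapedChainPairs n m k) :=
    .of_injective _ ShapedChainPairs.toChainPair_bijective.injective
  have (p : {p : Nat.Partition k // p.parts.card ≤ min n m}) :
      Finite (ChainsEndingAt n (toYoungDiagram p.1) × ChainsEndingAt m (toYoungDiagram p.1)) :=
    .of_injective (fun x => (⟨p, x⟩ : ShapedChainPairs n m k)) fun _ _ h =>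
      eq_of_heq (Sigma.mk.inj h).2
  rw [← Nat.card_eq_of_bijective _ ShapedChainPairs.toChainPair_bijective, Nat.card_sigma,
    sum_subtype (univ.filter fun p : Nat.Partition k => p.parts.card ≤ min n m)
      (p := fun p => p.parts.card ≤ min n m) (F := inferInstance) (fun p => by simp)]
  simp only [Nat.card_prod]

end Counting

end RSK

theorem cauchy_dimensions_general (n m k : ℕ) :
    Nat.choose (n * m + k - 1) k =
      ∑ p ∈ Finset.univ.filter
          (fun p : Nat.Partition k => p.parts.card ≤ min n m),
        ssytCount (toYoungDiagram p) n * ssytCount (toYoungDiagram p) m := by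
  simp only [RSK.ssytCount_eq_card_chainsEndingAt]
  rw [← RSK.card_matrix_sum_eq n m k, ← Nat.card_congr (RSK.chainPairSizeEquiv n m k),
    RSK.card_chainPair_size_eq]

/-- Cauchy identity in dimensions, expressing `(GL_n, GL_m)` duality
`S^k(ℂⁿ⊗ℂᵐ) = ⊕_λ V(λ) ⊗ V(λ)`: for `n, m ≥ 1`,
`C(nm + k − 1, k) = ∑_λ s_λ(1,…,1 [n ones]) · s_λ(1,…,1 [m ones])`, the sum over
partitions `λ` of `k` with at most `min(n,m)` rows. -/
theorem cauchy_dimensions (n m k : ℕ) (hn : 1 ≤ n) (hm : 1 ≤ m) :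
    Nat.choose (n * m + k - 1) k =
      ∑ p ∈ Finset.univ.filter
          (fun p : Nat.Partition k => p.parts.card ≤ min n m),
        ssytCount (toYoungDiagram p) n * ssytCount (toYoungDiagram p) m :=
  cauchy_dimensions_general n m k
end
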